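/- For all p = 2^n with n ≥ 3: in G_p each of the first p/2 vertices has score (outdegree) p/2 and each of the last p/2 vertices has score p/2 − 1; in G_p^* each of the first p/2 vertices has score p/2 − 1 and each of the last p/2 vertices has score p/2. Equivalently, for i ≤ p/2 the number of j with M_p[i,j] > 0 equals p/2 and the number of j with M_p^*[i,j] > 0 equals p/2 − 1, and for i > p/2 these counts are p/2 − 1 and p/2 respectively. -/

import Mathlib

/-- The matrix `M₄` (1-indexed). -/
def M4 (i j : ℕ) : ℤ :=
  (([[0,1,2,3],[-1,0,3,-2],[-2,-3,0,1],[-3,2,-1,0]] : List (List ℤ)).getD (i-1) []).getD (j-1) 0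

/-- The matrix `M₄*` (1-indexed). -/
def M4s (i j : ℕ) : ℤ :=
  (([[0,-2,-3,-1],[2,0,1,-3],[3,-1,0,2],[1,3,-2,0]] : List (List ℤ)).getD (i-1) []).getD (j-1) 0

/-- For block-index difference `d`, `blockSC d = (s, c)` means that the corresponding
4×4 block of `M_p` is `s·M₄ + c·I` (and the block of `M_p*` is `s·M₄* − c·I`):
`(1,0)` if `d = 0`; `(-1,4)` if `d ≡ 1 (mod 4)`; `(-1,-4)` if `d ≡ -1 (mod 4)`;
`(1, x+4)` if `d = y·2^x`, `x ≥ 1`, `y ≡ 1 (mod 4)`;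
`(1, -(x+4))` if `d = y·2^x`, `x ≥ 1`, `y ≡ -1 (mod 4)`. -/
def blockSC (d : ℤ) : ℤ × ℤ :=
  if d = 0 then (1, 0)
  else if d % 4 = 1 then (-1, 4)
  else if d % 4 = 3 then (-1, -4)
  else
    let x : ℕ := d.natAbs.factorization 2
    if (d / (2:ℤ)^x) % 4 = 1 then (1, (x:ℤ) + 4) else (1, -((x:ℤ) + 4))

/-- Entry `(i,j)` (1-indexed) of `M_p`, for any `p = 2^n ≥ 4` and `1 ≤ i,j ≤ p`;
the defining block formula depends only on `i` and `j`, not on `p`. -/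
def Ment (i j : ℕ) : ℤ :=
  let d : ℤ := (((j-1)/4 : ℕ) : ℤ) - (((i-1)/4 : ℕ) : ℤ)
  (blockSC d).1 * M4 ((i-1) % 4 + 1) ((j-1) % 4 + 1)
    + (if (i-1) % 4 = (j-1) % 4 then (blockSC d).2 else 0)

/-- Entry `(i,j)` (1-indexed) of `M_p*`. -/
def Ments (i j : ℕ) : ℤ :=
  let d : ℤ := (((j-1)/4 : ℕ) : ℤ) - (((i-1)/4 : ℕ) : ℤ)
  (blockSC d).1 * M4s ((i-1) % 4 + 1) ((j-1) % 4 + 1)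
    + (if (i-1) % 4 = (j-1) % 4 then -(blockSC d).2 else 0)

/-- The `p × p` matrix `M_p`, `p = 2^n`, as a function on 1-based indices
(entries outside the index range `1,…,p` are set to `0`). -/
def Mp (n i j : ℕ) : ℤ :=
  if 1 ≤ i ∧ i ≤ 2^n ∧ 1 ≤ j ∧ j ≤ 2^n then Ment i j else 0

/-- The `p × p` matrix `M_p*`, `p = 2^n`, as a function on 1-based indices. -/
def Mps (n i j : ℕ) : ℤ :=
  if 1 ≤ i ∧ i ≤ 2^n ∧ 1 ≤ j ∧ j ≤ 2^n then Ments i j else 0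

/-- The base mappings `σ_{4,k}` : `sigma4 k i = σ_{4,k}(i)` (value `0` at the
undefined point `i = k`). -/
def sigma4 (k i : ℕ) : ℕ :=
  (([[0,4,2,3],[3,0,4,1],[4,1,0,2],[2,3,1,0]] : List (List ℕ)).getD (k-1) []).getD (i-1) 0

/-- The mappings `σ_{p,k}` for `p = 2^n`: `sigma n k i = σ_{2^n, k}(i)`
(value `0` at the undefined point `i = k`, and junk values for `n < 2`). -/
def sigma : ℕ → ℕ → ℕ → ℕ
  | 0, _, _ => 0
  | 1, _, _ => 0
  | 2, k, i => sigma4 k i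
  | n+3, k, i =>
    let P := 2^(n+2)
    if k ≤ P then
      if i = k + P then i
      else if i ≤ P then sigma (n+2) k i + P
      else sigma (n+2) k (i - P)
    else
      if i = k - P then i
      else if i ≤ P then sigma (n+2) (k - P) i + P
      else sigma (n+2) (k - P) (i - P)

open Finset

/-!
Write the row as `i = 4I + r + 1`. Block column `J` contributes row `r` of `s·M₄ + c(J - I)·1`
with a sign `s = ±1` alternating in `J`. As `M₄` has zero diagonal and nonzero off-diagonal
entries, each pair of consecutive blocks contributes exactly `3` positive off-diagonal entries,
so the score is `3p/8 + E(I)`, where `E(I)` counts the `J < p/4` with `c(J - I) > 0`.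

Writing `d = y·2^x` with `y` odd, `c(d)` has the sign of `y mod 4`; hence `c(-d) = -c(d)`, and
`c(2h - d) = -c(d)` unless `h ∣ d`, where `h = p/8`. So moving the window of offsets `J - I`
by one step does not change `E`, except at `I = h`, where `E` drops by one. Combined with
`E(0) + E(2h - 1) = 2h - 1` (negation of the offsets), `E = h` on the first half and `h - 1` on
the second. In `M_p*` the diagonal is `-c(J - I) = c(I - J)`, which reflects the window and
swaps the halves.
-/

lemma blockSC_fst (d : ℤ) : (blockSC d).1 = if d % 2 = 0 then 1 else -1 := by
  unfold blockSC
  dsimp only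
  split_ifs <;> first | rfl | omega

lemma blockSC_fst_ne_zero (d : ℤ) : (blockSC d).1 ≠ 0 := by
  rw [blockSC_fst]; split_ifs <;> decide

lemma blockSC_fst_add_one (d : ℤ) : (blockSC (d + 1)).1 = -(blockSC d).1 := by
  rw [blockSC_fst, blockSC_fst]; split_ifs <;> first | rfl | omega

lemma blockSC_snd_zero : (blockSC 0).2 = 0 := rfl

lemma blockSC_snd_odd_mul_two_pow (x : ℕ) {y : ℤ} (hy : y % 2 = 1) :
    (blockSC (y * 2 ^ x)).2 = if y % 4 = 1 then (x : ℤ) + 4 else -((x : ℤ) + 4) := by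
  have hy0 : y ≠ 0 := by omega
  rcases x with _ | k
  · rw [pow_zero, mul_one]
    unfold blockSC
    split_ifs <;> first | rfl | omega
  · have hd0 : y * 2 ^ (k + 1) ≠ 0 := by positivity
    have heven : y * 2 ^ (k + 1) = 2 * (y * 2 ^ k) := by ring
    have hv : (y * 2 ^ (k + 1)).natAbs.factorization 2 = k + 1 := by
      have hodd : ¬ 2 ∣ y.natAbs := by omega
      rw [Int.natAbs_mul, Int.natAbs_pow, Nat.factorization_mul (by omega) (by positivity),
        Finsupp.add_apply, Nat.factorization_eq_zero_of_not_dvd hodd]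
      simp [Nat.prime_two.factorization_self]
    unfold blockSC
    simp only [hd0, if_false, hv, Int.mul_ediv_cancel _ (by positivity : (2 : ℤ) ^ (k + 1) ≠ 0)]
    split_ifs <;> first | rfl | omega

lemma exists_odd_mul_two_pow {d : ℤ} (hd : d ≠ 0) :
    ∃ (x : ℕ) (y : ℤ), y % 2 = 1 ∧ d = y * 2 ^ x := by
  obtain ⟨x, o, ho, hdo⟩ := Nat.exists_eq_two_pow_mul_odd (Int.natAbs_ne_zero.mpr hd)
  obtain ⟨c, rfl⟩ := ho
  rcases Int.natAbs_eq d with h | h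
  · exact ⟨x, 2 * c + 1, by omega, by rw [h, hdo]; push_cast; ring⟩
  · exact ⟨x, -(2 * c + 1), by omega, by rw [h, hdo]; push_cast; ring⟩

lemma blockSC_snd_mul_two_pow_of_add_mod_four (x : ℕ) {y z : ℤ} (hy : y % 2 = 1)
    (hyz : (y + z) % 4 = 0) : (blockSC (z * 2 ^ x)).2 = -(blockSC (y * 2 ^ x)).2 := by
  rw [blockSC_snd_odd_mul_two_pow x hy, blockSC_snd_odd_mul_two_pow x (by omega)]
  split_ifs <;> omega

lemma blockSC_snd_neg (d : ℤ) : (blockSC (-d)).2 = -(blockSC d).2 := by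
  rcases eq_or_ne d 0 with rfl | hd
  · rfl
  obtain ⟨x, y, hy, rfl⟩ := exists_odd_mul_two_pow hd
  rw [← neg_mul]
  exact blockSC_snd_mul_two_pow_of_add_mod_four x hy (by omega)

lemma blockSC_snd_two_pow_succ_sub {t : ℕ} {d : ℤ} (hd : ¬ (2 : ℤ) ^ t ∣ d) :
    (blockSC (2 ^ (t + 1) - d)).2 = -(blockSC d).2 := by
  obtain ⟨x, y, hy, rfl⟩ :=
    exists_odd_mul_two_pow (d := d) (by rintro rfl; exact hd (dvd_zero _))
  have hxt : x < t := by
    by_contra! h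
    exact hd (Dvd.dvd.mul_left (pow_dvd_pow 2 h) y)
  have hsub : (2 : ℤ) ^ (t + 1) - y * 2 ^ x = (4 * 2 ^ (t - 1 - x) - y) * 2 ^ x := by
    rw [sub_mul, mul_assoc, ← pow_add, show (4 : ℤ) = 2 ^ 2 by norm_num, ← pow_add]
    congr 2; omega
  rw [hsub]
  exact blockSC_snd_mul_two_pow_of_add_mod_four x hy (by omega)

lemma blockSC_snd_ne_zero {d : ℤ} (hd : d ≠ 0) : (blockSC d).2 ≠ 0 := by
  obtain ⟨x, y, hy, rfl⟩ := exists_odd_mul_two_pow hd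
  rw [blockSC_snd_odd_mul_two_pow x hy]
  split_ifs <;> omega

lemma blockSC_snd_two_pow_pos (t : ℕ) : 0 < (blockSC (2 ^ t)).2 := by
  rw [← one_mul ((2 : ℤ) ^ t), blockSC_snd_odd_mul_two_pow t (by norm_num)]
  norm_num
  omega

def diagPos (d : ℤ) : ℕ := if 0 < (blockSC d).2 then 1 else 0

-- `E(I)` of the sketch above, for `m = p/4` blocks.
def diagPosCount (m I : ℕ) : ℕ := ∑ J ∈ range m, diagPos ((J : ℤ) - I)

lemma diagPos_add_diagPos_neg {d : ℤ} (hd : d ≠ 0) : diagPos d + diagPos (-d) = 1 := by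
  have := blockSC_snd_ne_zero hd
  simp only [diagPos, blockSC_snd_neg]
  split_ifs <;> omega

lemma diagPos_two_pow (t : ℕ) : diagPos (2 ^ t) = 1 := if_pos (blockSC_snd_two_pow_pos t)

lemma diagPos_neg_two_pow (t : ℕ) : diagPos (-2 ^ t) = 0 := by
  have := diagPos_add_diagPos_neg (d := 2 ^ t) (by positivity)
  rw [diagPos_two_pow] at this
  omega

lemma diagPosCount_succ_add {m : ℕ} (hm : m ≠ 0) (I : ℕ) :
    diagPosCount m (I + 1) + diagPos (m - ((I : ℤ) + 1))
      = diagPosCount m I + diagPos (-((I : ℤ) + 1)) := by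
  obtain ⟨k, rfl⟩ := Nat.exists_eq_succ_of_ne_zero hm
  unfold diagPosCount
  rw [sum_range_succ', sum_range_succ]
  push_cast
  simp only [add_sub_add_right_eq_sub, zero_sub]
  ring

lemma diagPosCount_zero_add (k : ℕ) : diagPosCount (k + 1) 0 + diagPosCount (k + 1) k = k := by
  have hreflect : diagPosCount (k + 1) k = ∑ J ∈ range (k + 1), diagPos (-(J : ℤ)) := by
    rw [diagPosCount, ← sum_range_reflect]
    refine sum_congr rfl fun J hJ => ?_
    rw [mem_range] at hJ
    congr 1
    omega
  rw [hreflect, diagPosCount, ← sum_add_distrib, sum_range_succ']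
  simp only [Nat.cast_zero, sub_zero, neg_zero]
  rw [sum_congr rfl fun J _ => diagPos_add_diagPos_neg (by omega)]
  simp [diagPos, blockSC_snd_zero]

lemma diagPosCount_succ_of_ne {t I : ℕ} (hI : I + 1 < 2 ^ (t + 1)) (hne : I + 1 ≠ 2 ^ t) :
    diagPosCount (2 ^ (t + 1)) (I + 1) = diagPosCount (2 ^ (t + 1)) I := by
  have hndvd : ¬ (2 : ℤ) ^ t ∣ (I : ℤ) + 1 := fun h => hne <|
    Nat.eq_of_dvd_of_lt_two_mul (by omega) (by exact_mod_cast h) (by rw [← pow_succ']; omega)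
  have h := diagPosCount_succ_add (m := 2 ^ (t + 1)) (by positivity) I
  rw [diagPos, diagPos, blockSC_snd_neg, Nat.cast_pow, Nat.cast_ofNat,
    blockSC_snd_two_pow_succ_sub hndvd] at h
  omega

lemma diagPosCount_two_pow_add_one (t : ℕ) :
    diagPosCount (2 ^ (t + 1)) (2 ^ t) + 1 = diagPosCount (2 ^ (t + 1)) (2 ^ t - 1) := by
  have h := diagPosCount_succ_add (m := 2 ^ (t + 1)) (by positivity) (2 ^ t - 1)
  have hcast : ((2 ^ t - 1 : ℕ) : ℤ) + 1 = 2 ^ t := by push_cast [Nat.one_le_two_pow]; ring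
  have hsub : (2 : ℤ) ^ (t + 1) - 2 ^ t = 2 ^ t := by ring
  rw [hcast, Nat.sub_add_cancel Nat.one_le_two_pow, Nat.cast_pow, Nat.cast_ofNat, hsub,
    diagPos_two_pow, diagPos_neg_two_pow] at h
  omega

lemma diagPosCount_of_lt {t I : ℕ} (hI : I < 2 ^ t) :
    diagPosCount (2 ^ (t + 1)) I = diagPosCount (2 ^ (t + 1)) 0 := by
  have : 2 ^ t < 2 ^ (t + 1) := Nat.pow_lt_pow_succ one_lt_two
  induction I with
  | zero => rfl
  | succ I ih => rw [diagPosCount_succ_of_ne (by omega) (by omega), ih (by omega)]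

lemma diagPosCount_of_le {t I : ℕ} (h₁ : 2 ^ t ≤ I) (h₂ : I < 2 ^ (t + 1)) :
    diagPosCount (2 ^ (t + 1)) I = diagPosCount (2 ^ (t + 1)) (2 ^ t) := by
  induction I, h₁ using Nat.le_induction with
  | base => rfl
  | succ I hI ih => rw [diagPosCount_succ_of_ne h₂ (by omega), ih (by omega)]

lemma diagPosCount_two_pow_succ {t I : ℕ} (hI : I < 2 ^ (t + 1)) :
    diagPosCount (2 ^ (t + 1)) I = if I < 2 ^ t then 2 ^ t else 2 ^ t - 1 := by
  have h₁ : 1 ≤ 2 ^ t := Nat.one_le_two_pow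
  have hpow : 2 ^ (t + 1) = 2 ^ t + 2 ^ t := by ring
  obtain ⟨k, hk⟩ : ∃ k, 2 ^ (t + 1) = k + 1 := ⟨2 ^ t + 2 ^ t - 1, by omega⟩
  have hsum := diagPosCount_zero_add k
  rw [← hk, diagPosCount_of_le (I := k) (by omega) (by omega)] at hsum
  have hcross := diagPosCount_two_pow_add_one t
  rw [diagPosCount_of_lt (I := 2 ^ t - 1) (by omega)] at hcross
  split_ifs with h
  · rw [diagPosCount_of_lt h]; omega
  · rw [diagPosCount_of_le (by omega) hI]; omega

lemma sum_range_mul_eq_sum_sum (b m : ℕ) (f : ℕ → ℕ) :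
    ∑ k ∈ range (b * m), f k = ∑ J ∈ range m, ∑ q ∈ range b, f (b * J + q) := by
  induction m with
  | zero => simp
  | succ m ih => rw [Nat.mul_succ, sum_range_add, ih, sum_range_succ]

lemma sum_pos_mul_alternating (a : ℤ) (ha : a ≠ 0) (s : ℕ → ℤ) (hs0 : ∀ J, s J ≠ 0)
    (hs : ∀ J, s (J + 1) = -s J) (K : ℕ) :
    ∑ J ∈ range (2 * K), (if 0 < s J * a then 1 else 0) = K := by
  rw [sum_range_mul_eq_sum_sum]
  have hpair : ∀ J, ∑ q ∈ range 2, (if 0 < s (2 * J + q) * a then 1 else 0) = 1 := by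
    intro J
    have hne : s (2 * J) * a ≠ 0 := mul_ne_zero (hs0 _) ha
    simp only [sum_range_succ, sum_range_zero, add_zero, zero_add, hs, neg_mul]
    split_ifs <;> omega
  simp [hpair]

lemma sum_pos_block_row {b : ℕ} (A : ℕ → ℕ → ℤ) {r : ℕ} (hr : r < b) (hdiag : A r r = 0)
    (hoff : ∀ q < b, q ≠ r → A r q ≠ 0) (s c : ℕ → ℤ) (hs0 : ∀ J, s J ≠ 0)
    (hs : ∀ J, s (J + 1) = -s J) (K : ℕ) :
    ∑ J ∈ range (2 * K), ∑ q ∈ range b,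
        (if 0 < s J * A r q + (if r = q then c J else 0) then 1 else 0)
      = (b - 1) * K + ∑ J ∈ range (2 * K), (if 0 < c J then 1 else 0) := by
  have hsplit : ∀ J,
      ∑ q ∈ range b, (if 0 < s J * A r q + (if r = q then c J else 0) then 1 else 0)
        = ∑ q ∈ (range b).erase r, (if 0 < s J * A r q then 1 else 0)
          + (if 0 < c J then 1 else 0) := by
    intro J
    rw [← add_sum_erase _ _ (mem_range.mpr hr), add_comm, if_pos rfl, hdiag, mul_zero, zero_add]
    congr 1
    refine sum_congr rfl fun q hq => ?_
    rw [if_neg (ne_of_mem_erase hq).symm, add_zero]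
  simp only [hsplit, sum_add_distrib]
  rw [sum_comm, sum_congr rfl fun q hq => sum_pos_mul_alternating _
    (hoff q (mem_range.mp (mem_of_mem_erase hq)) (ne_of_mem_erase hq)) s hs0 hs K]
  simp [card_erase_of_mem (mem_range.mpr hr)]

lemma card_filter_Icc_one (N : ℕ) (P : ℕ → Prop) [DecidablePred P] :
    ((Icc 1 N).filter P).card = ∑ k ∈ range N, if P (k + 1) then 1 else 0 := by
  rw [card_filter, ← Finset.Ico_add_one_right_eq_Icc, sum_Ico_eq_sum_range]
  simp [add_comm]

lemma M4_diag_eq_zero_offDiag_ne_zero :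
    ∀ r < 4, M4 (r + 1) (r + 1) = 0 ∧ ∀ q < 4, q ≠ r → M4 (r + 1) (q + 1) ≠ 0 := by
  decide

lemma M4s_diag_eq_zero_offDiag_ne_zero :
    ∀ r < 4, M4s (r + 1) (r + 1) = 0 ∧ ∀ q < 4, q ≠ r → M4s (r + 1) (q + 1) ≠ 0 := by
  decide

lemma Ment_block {I r J q : ℕ} (hr : r < 4) (hq : q < 4) :
    Ment (4 * I + r + 1) (4 * J + q + 1)
      = (blockSC ((J : ℤ) - I)).1 * M4 (r + 1) (q + 1)
        + if r = q then (blockSC ((J : ℤ) - I)).2 else 0 := by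
  simp [Ment, Nat.mul_add_div, Nat.div_eq_of_lt, Nat.mod_eq_of_lt, hr, hq]

lemma Ments_block {I r J q : ℕ} (hr : r < 4) (hq : q < 4) :
    Ments (4 * I + r + 1) (4 * J + q + 1)
      = (blockSC ((J : ℤ) - I)).1 * M4s (r + 1) (q + 1)
        + if r = q then (blockSC ((I : ℤ) - J)).2 else 0 := by
  rw [← neg_sub (J : ℤ), blockSC_snd_neg]
  simp [Ments, Nat.mul_add_div, Nat.div_eq_of_lt, Nat.mod_eq_of_lt, hr, hq]

lemma card_filter_pos_of_block_row (A : ℕ → ℕ → ℤ)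
    (hA : ∀ r < 4, A r r = 0 ∧ ∀ q < 4, q ≠ r → A r q ≠ 0) (e c : ℕ → ℤ) {I r K : ℕ}
    (hr : r < 4)
    (he : ∀ J < 2 * K, ∀ q < 4,
      e (4 * J + q + 1) = (blockSC ((J : ℤ) - I)).1 * A r q + if r = q then c J else 0) :
    ((Icc 1 (4 * (2 * K))).filter fun j => 0 < e j).card
      = 3 * K + ∑ J ∈ range (2 * K), if 0 < c J then 1 else 0 := by
  rw [card_filter_Icc_one, sum_range_mul_eq_sum_sum]
  rw [sum_congr rfl fun J hJ => sum_congr rfl fun q hq =>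
    by rw [he J (mem_range.mp hJ) q (mem_range.mp hq)]]
  exact sum_pos_block_row A hr (hA r hr).1 (hA r hr).2 (fun J => (blockSC ((J : ℤ) - I)).1) c
    (fun J => blockSC_fst_ne_zero _)
    (fun J => by push_cast; rw [add_sub_right_comm, blockSC_fst_add_one]) K

lemma card_filter_Mp_pos {t I r : ℕ} (hr : r < 4) (hI : I < 2 ^ (t + 1)) :
    ((Icc 1 (2 ^ (t + 3))).filter fun j => 0 < Mp (t + 3) (4 * I + r + 1) j).card
      = 3 * 2 ^ t + diagPosCount (2 ^ (t + 1)) I := by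
  rw [show 2 ^ (t + 3) = 4 * (2 * 2 ^ t) by ring]
  rw [card_filter_pos_of_block_row (fun r q => M4 (r + 1) (q + 1))
    M4_diag_eq_zero_offDiag_ne_zero _ (fun J => (blockSC ((J : ℤ) - I)).2) hr]
  · rw [diagPosCount, pow_succ']; rfl
  intro J hJ q hq
  have : 2 ^ (t + 3) = 8 * 2 ^ t := by ring
  rw [Mp, if_pos (by omega), Ment_block hr hq]

lemma sum_diagPos_sub_eq {m I : ℕ} (hI : I < m) :
    ∑ J ∈ range m, diagPos ((I : ℤ) - J) = diagPosCount m (m - 1 - I) := by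
  rw [diagPosCount, ← sum_range_reflect]
  refine sum_congr rfl fun J hJ => ?_
  rw [mem_range] at hJ
  congr 1
  omega

lemma card_filter_Mps_pos {t I r : ℕ} (hr : r < 4) (hI : I < 2 ^ (t + 1)) :
    ((Icc 1 (2 ^ (t + 3))).filter fun j => 0 < Mps (t + 3) (4 * I + r + 1) j).card
      = 3 * 2 ^ t + diagPosCount (2 ^ (t + 1)) (2 ^ (t + 1) - 1 - I) := by
  rw [show 2 ^ (t + 3) = 4 * (2 * 2 ^ t) by ring]
  rw [card_filter_pos_of_block_row (fun r q => M4s (r + 1) (q + 1))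
    M4s_diag_eq_zero_offDiag_ne_zero _ (fun J => (blockSC ((I : ℤ) - J)).2) hr]
  · rw [← sum_diagPos_sub_eq hI, pow_succ']; rfl
  intro J hJ q hq
  have : 2 ^ (t + 3) = 8 * 2 ^ t := by ring
  rw [Mps, if_pos (by omega), Ments_block hr hq]

/-- For all `p = 2^n` with `n ≥ 3`: in `G_p` each of the first `p/2`
vertices has score `p/2` and each of the last `p/2` vertices has score `p/2 − 1`;
in `G_p*` the first `p/2` vertices have score `p/2 − 1` and the last `p/2` have
score `p/2`. -/
theorem stmt14 (n p : ℕ) (hn : 3 ≤ n) (hp : p = 2^n) (i : ℕ) (hi1 : 1 ≤ i) (hi2 : i ≤ p) :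
    (i ≤ p/2 →
      ((Finset.Icc 1 p).filter (fun j => 0 < Mp n i j)).card = p/2 ∧
      ((Finset.Icc 1 p).filter (fun j => 0 < Mps n i j)).card = p/2 - 1) ∧
    (p/2 < i →
      ((Finset.Icc 1 p).filter (fun j => 0 < Mp n i j)).card = p/2 - 1 ∧
      ((Finset.Icc 1 p).filter (fun j => 0 < Mps n i j)).card = p/2) := by
  subst hp
  obtain ⟨t, rfl⟩ : ∃ t, n = t + 3 := ⟨n - 3, by omega⟩
  obtain ⟨I, r, hr, rfl⟩ : ∃ I r, r < 4 ∧ i = 4 * I + r + 1 :=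
    ⟨(i - 1) / 4, (i - 1) % 4, Nat.mod_lt _ (by norm_num), by omega⟩
  have hpow : 2 ^ (t + 3) = 8 * 2 ^ t := by ring
  have hpow' : 2 ^ (t + 1) = 2 * 2 ^ t := by ring
  have hI : I < 2 ^ (t + 1) := by omega
  rw [card_filter_Mp_pos hr hI, card_filter_Mps_pos hr hI, diagPosCount_two_pow_succ hI,
    diagPosCount_two_pow_succ (by omega)]
  have : 1 ≤ 2 ^ t := Nat.one_le_two_pow
  constructor <;> intro h <;> constructor <;> split_ifs <;> omega
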